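/- Size of the transformed graph. Let G = (V,E,T,α,β) be a temporal graph with cost function c and let G' = (V',E',T,β') be the instantaneous temporal graph produced by Transformation 1. Then |V'| = |V| + |E| and |E'| = 2·|E|; moreover, for every temporal walk P of k time-arcs in G, the corresponding temporal walk P' in G' has exactly 2k time-arcs, starts at the same vertex, ends at the same vertex, has first time stamp t'_1 = t_1, and has last time stamp t'_{2k} = t_k + λ_k + α(v_k), where t_1 is the first time stamp of P and (v_{k−1},v_k,t_k,λ_k) is its last time-arc. -/

import Mathlib

namespace TW

/-- A time-arc `(v, w, t, λ)` of a temporal graph: a directed connection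
from `src` to `dst` with time stamp `ts` and transmission time `tt`. -/
structure TArc (V : Type*) where
  src : V
  dst : V
  ts : ℕ
  tt : ℕ
deriving DecidableEq

/-- A time-arc `(v, w, t)` of an instantaneous temporal graph. -/
structure IArc (V : Type*) where
  src : V
  dst : V
  ts : ℕ
deriving DecidableEq

variable {V : Type*}

/-- `ValidTG Vset T E af bf` expresses that `(Vset, E, T, af, bf)` is a temporal
graph: `E ⊆ V × V × {1,…,T} × {0,…,T}` and `af, bf : V → {0,…,T}`. -/
def ValidTG (Vset : Finset V) (T : ℕ) (E : Finset (TArc V))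
    (af bf : V → ℕ) : Prop :=
  (∀ e ∈ E, e.src ∈ Vset ∧ e.dst ∈ Vset ∧ 1 ≤ e.ts ∧ e.ts ≤ T ∧ e.tt ≤ T) ∧
    ∀ v, af v ≤ T ∧ bf v ≤ T

/-- Validity for an instantaneous temporal graph `(Vset, E, T, bf)`. -/
def ValidIG (Vset : Finset V) (T : ℕ) (E : Finset (IArc V))
    (bf : V → ℕ) : Prop :=
  (∀ e ∈ E, e.src ∈ Vset ∧ e.dst ∈ Vset ∧ 1 ≤ e.ts ∧ e.ts ≤ T) ∧
    ∀ v, bf v ≤ T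

/-- A temporal walk from `s` to `z` in the temporal graph with time-arc set `E`,
minimum waiting times `af`, and maximum waiting times `bf`:
a nonempty sequence `((v_{i-1}, v_i, t_i, λ_i))_{i=1}^k` of time-arcs of `E`
with `v_0 = s`, `v_k = z`, and
`t_i + λ_i + af v_i ≤ t_{i+1} ≤ t_i + λ_i + bf v_i` for all `i ∈ {1,…,k-1}`. -/
def IsTWalk (E : Finset (TArc V)) (af bf : V → ℕ) (s z : V)
    (P : List (TArc V)) : Prop :=
  P ≠ [] ∧ (∀ e ∈ P, e ∈ E) ∧
    P.head?.map TArc.src = some s ∧ P.getLast?.map TArc.dst = some z ∧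
    List.Chain' (fun e f => e.dst = f.src ∧
      e.ts + e.tt + af e.dst ≤ f.ts ∧ f.ts ≤ e.ts + e.tt + bf e.dst) P

/-- A temporal walk from `s` to `z` in an instantaneous temporal graph. -/
def IsIWalk (E : Finset (IArc V)) (bf : V → ℕ) (s z : V)
    (P : List (IArc V)) : Prop :=
  P ≠ [] ∧ (∀ e ∈ P, e ∈ E) ∧
    P.head?.map IArc.src = some s ∧ P.getLast?.map IArc.dst = some z ∧
    List.Chain' (fun e f => e.dst = f.src ∧
      e.ts ≤ f.ts ∧ f.ts ≤ e.ts + bf e.dst) P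

/-- The vertex sequence `v_0, v_1, …, v_k` of a walk. -/
def tVerts (P : List (TArc V)) : List V :=
  (P.head?.map TArc.src).toList ++ P.map TArc.dst

/-- The vertex sequence `v_0, v_1, …, v_k` of a walk (instantaneous case). -/
def iVerts (P : List (IArc V)) : List V :=
  (P.head?.map IArc.src).toList ++ P.map IArc.dst

/-- Departure time `t_1` of a walk. -/
def tFirst (P : List (TArc V)) : ℕ := (P.head?.map TArc.ts).getD 0

/-- Arrival time `t_k + λ_k` of a walk. -/
def tLastArr (P : List (TArc V)) : ℕ :=
  (P.getLast?.map (fun e => e.ts + e.tt)).getD 0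

/-- First time stamp `t_1` of an instantaneous walk. -/
def iFirst (P : List (IArc V)) : ℕ := (P.head?.map IArc.ts).getD 0

/-- Last time stamp `t_m` of an instantaneous walk. -/
def iLast (P : List (IArc V)) : ℕ := (P.getLast?.map IArc.ts).getD 0

/-- Total waiting time `∑_{i=1}^{k-1} (t_{i+1} - (t_i + λ_i))` of a walk. -/
def waitSum (P : List (TArc V)) : ℚ :=
  ((P.zip P.tail).map
    (fun ef => (ef.2.ts : ℚ) - ((ef.1.ts : ℚ) + (ef.1.tt : ℚ)))).sum

/-- `val(P)`: the linear combination
`δ1·(t_k+λ_k) + δ2·(−t_1) + δ3·(t_k+λ_k−t_1) + δ4·Σλ_i + δ5·Σc(e_i) + δ6·k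
 + δ7·Σ(t_{i+1}−(t_i+λ_i))`. -/
def val (c : TArc V → ℕ) (d1 d2 d3 d4 d5 d6 d7 : ℚ) (P : List (TArc V)) : ℚ :=
  d1 * (tLastArr P : ℚ) + d2 * (-(tFirst P : ℚ))
    + d3 * ((tLastArr P : ℚ) - (tFirst P : ℚ))
    + d4 * (P.map (fun e => (e.tt : ℚ))).sum
    + d5 * (P.map (fun e => (c e : ℚ))).sum
    + d6 * (P.length : ℚ) + d7 * waitSum P

/-- `∑_{i=1}^{m-1} ((t_{i+1} − (t_i − A(v_i)))·ind(v_i))` for an instantaneous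
walk, where `v_i` is the intermediate vertex between `e_i` and `e_{i+1}`. -/
def iWaitSum (ind A : V → ℕ) (P : List (IArc V)) : ℚ :=
  ((P.zip P.tail).map
    (fun ef => ((ef.2.ts : ℚ) - ((ef.1.ts : ℚ) - (A ef.1.dst : ℚ)))
      * (ind ef.1.dst : ℚ))).sum

/-- `val'(P)`: the adapted linear combination
`δ1·t_m + δ2·(−t_1) + δ3·(t_m−t_1) + δ4·Σc_λ(e_i) + δ5·Σc(e_i) + (δ6/2)·m
 + δ7·Σ((t_{i+1}−(t_i−A(v_i)))·ind(v_i))` for instantaneous walks. -/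
def val' (c cl : IArc V → ℕ) (ind A : V → ℕ) (d1 d2 d3 d4 d5 d6 d7 : ℚ)
    (P : List (IArc V)) : ℚ :=
  d1 * (iLast P : ℚ) + d2 * (-(iFirst P : ℚ))
    + d3 * ((iLast P : ℚ) - (iFirst P : ℚ))
    + d4 * (P.map (fun e => (cl e : ℚ))).sum
    + d5 * (P.map (fun e => (c e : ℚ))).sum
    + (d6 / 2) * (P.length : ℚ) + d7 * iWaitSum ind A P

section Transformation

variable [DecidableEq V]

/-- The arcs `E^O = {(v, v_e, t) : e = (v,u,t,λ) ∈ E}` of Transformation 1. -/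
def trEO (E : Finset (TArc V)) : Finset (IArc (V ⊕ TArc V)) :=
  E.image (fun e => ⟨Sum.inl e.src, Sum.inr e, e.ts⟩)

/-- The arcs `E^I = {(v_e, u, t+λ+α(u)) : e = (v,u,t,λ) ∈ E}`. -/
def trEI (af : V → ℕ) (E : Finset (TArc V)) : Finset (IArc (V ⊕ TArc V)) :=
  E.image (fun e => ⟨Sum.inr e, Sum.inl e.dst, e.ts + e.tt + af e.dst⟩)

/-- The arc set `E' = E^O ∪ E^I` of the transformed instantaneous graph. -/
def trE (af : V → ℕ) (E : Finset (TArc V)) : Finset (IArc (V ⊕ TArc V)) :=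
  trEO E ∪ trEI af E

/-- `β'`: `β' v = β v` for `v ∈ V` and `β' v_e = T` for arc vertices. -/
def trBeta (bf : V → ℕ) (T : ℕ) : V ⊕ TArc V → ℕ :=
  Sum.elim bf (fun _ => T)

/-- The transformed cost function `c'`. -/
def trC (c : TArc V → ℕ) : IArc (V ⊕ TArc V) → ℕ := fun e' =>
  match e'.src, e'.dst with
  | Sum.inl _, Sum.inr eh => c eh
  | _, _ => 0

/-- The transmission-cost function `c_λ`. -/
def trCl : IArc (V ⊕ TArc V) → ℕ := fun e' =>
  match e'.src, e'.dst with
  | Sum.inr eh, Sum.inl _ => eh.tt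
  | _, _ => 0

/-- The vertex-index function `ind`: `1` on original vertices, `0` else. -/
def trInd : V ⊕ TArc V → ℕ := Sum.elim (fun _ => 1) (fun _ => 0)

/-- The auxiliary function `A`: `A v = α v` on original vertices, `0` else. -/
def trA (af : V → ℕ) : V ⊕ TArc V → ℕ := Sum.elim af (fun _ => 0)

/-- The walk `P'` in `G'` corresponding to a walk `P` in `G`:
each arc `e = (v,u,t,λ)` is replaced by the two arcs
`(v, v_e, t)` and `(v_e, u, t+λ+α(u))`. -/
def corr (af : V → ℕ) (P : List (TArc V)) : List (IArc (V ⊕ TArc V)) :=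
  P.flatMap (fun e =>
    [⟨Sum.inl e.src, Sum.inr e, e.ts⟩,
     ⟨Sum.inr e, Sum.inl e.dst, e.ts + e.tt + af e.dst⟩])

end Transformation


theorem _root_.Finset.image_inl_union_image_inr {α β : Type*} [DecidableEq α] [DecidableEq β]
    (s : Finset α) (t : Finset β) :
    s.image Sum.inl ∪ t.image Sum.inr = s.disjSum t := by
  ext (a | b) <;> simp

section Transformation

variable [DecidableEq V]

theorem card_trEO (E : Finset (TArc V)) : (trEO E).card = E.card :=
  Finset.card_image_of_injective _ fun e f h => by simpa using congrArg IArc.dst h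

theorem card_trEI (af : V → ℕ) (E : Finset (TArc V)) : (trEI af E).card = E.card :=
  Finset.card_image_of_injective _ fun e f h => by simpa using congrArg IArc.src h

theorem disjoint_trEO_trEI (af : V → ℕ) (E : Finset (TArc V)) :
    Disjoint (trEO E) (trEI af E) := by
  simp only [trEO, trEI, Finset.disjoint_left, Finset.mem_image]
  rintro _ ⟨e, -, rfl⟩ ⟨f, -, h⟩
  simpa using congrArg IArc.src h

theorem card_trE (af : V → ℕ) (E : Finset (TArc V)) : (trE af E).card = 2 * E.card := by
  rw [trE, Finset.card_union_of_disjoint (disjoint_trEO_trEI af E), card_trEO, card_trEI,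
    two_mul]

end Transformation

theorem corr_length (af : V → ℕ) (P : List (TArc V)) :
    (corr af P).length = 2 * P.length := by
  induction P with
  | nil => rfl
  | cons e P ih =>
    simp only [corr, List.flatMap_cons, List.length_append, List.length_cons,
      List.length_nil] at ih ⊢
    omega

theorem corr_head? (af : V → ℕ) (P : List (TArc V)) :
    (corr af P).head? = P.head?.map fun e => ⟨Sum.inl e.src, Sum.inr e, e.ts⟩ := by
  cases P <;> simp [corr]

theorem corr_getLast? (af : V → ℕ) (P : List (TArc V)) :
    (corr af P).getLast? =
      P.getLast?.map fun e => ⟨Sum.inr e, Sum.inl e.dst, e.ts + e.tt + af e.dst⟩ := by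
  induction P using List.reverseRecOn <;> simp [corr]

theorem transformed_graph_size_general
    {V : Type*} [DecidableEq V]
    (Vset : Finset V) (E : Finset (TArc V)) (af bf : V → ℕ) :
    (Vset.image (Sum.inl : V → V ⊕ TArc V) ∪
        E.image (Sum.inr : TArc V → V ⊕ TArc V)).card = Vset.card + E.card ∧
    (trE af E).card = 2 * E.card ∧
    ∀ (s z : V) (P : List (TArc V)), IsTWalk E af bf s z P →
      (corr af P).length = 2 * P.length ∧
      (corr af P).head?.map IArc.src = some (Sum.inl s) ∧
      (corr af P).getLast?.map IArc.dst = some (Sum.inl z) ∧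
      iFirst (corr af P) = tFirst P ∧
      ∀ e : TArc V, P.getLast? = some e →
        iLast (corr af P) = e.ts + e.tt + af e.dst := by
  refine ⟨by rw [Finset.image_inl_union_image_inr, Finset.card_disjSum], card_trE af E, ?_⟩
  rintro s z P ⟨-, -, hs, hz, -⟩
  refine ⟨corr_length af P, ?_, ?_, ?_, fun e he => ?_⟩
  · simpa [corr_head?, Option.map_map] using hs
  · simpa [corr_getLast?, Option.map_map] using hz
  · simp [iFirst, tFirst, corr_head?, Option.map_map, Function.comp_def]
  · simp [iLast, corr_getLast?, he]

/-- **Size of the transformed graph.** `|V'| = |V| + |E|` and `|E'| = 2·|E|`;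
moreover, for every temporal walk `P` of `k` time-arcs in `G`, the
corresponding walk `P'` in `G'` has exactly `2k` time-arcs, starts and ends at
the same vertices, has first time stamp `t_1`, and has last time stamp
`t_k + λ_k + α(v_k)`. -/
theorem transformed_graph_size
    {V : Type*} [DecidableEq V]
    (Vset : Finset V) (T : ℕ) (E : Finset (TArc V)) (af bf : V → ℕ)
    (c : TArc V → ℕ) (hG : ValidTG Vset T E af bf) :
    (Vset.image (Sum.inl : V → V ⊕ TArc V) ∪
        E.image (Sum.inr : TArc V → V ⊕ TArc V)).card = Vset.card + E.card ∧
    (trE af E).card = 2 * E.card ∧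
    ∀ (s z : V) (P : List (TArc V)), IsTWalk E af bf s z P →
      (corr af P).length = 2 * P.length ∧
      (corr af P).head?.map IArc.src = some (Sum.inl s) ∧
      (corr af P).getLast?.map IArc.dst = some (Sum.inl z) ∧
      iFirst (corr af P) = tFirst P ∧
      ∀ e : TArc V, P.getLast? = some e →
        iLast (corr af P) = e.ts + e.tt + af e.dst :=
  transformed_graph_size_general Vset E af bf

end TW
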